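/- arXiv:2510.22430 — 5 statements merged into one kernel-verified Lean document; each statement's English description precedes it below -/
import Mathlib

section
/- For every natural number n ≥ 1 and every integer x with 1 ≤ x ≤ 2^n - 1, we have x = ⌊⌊x·5^n/2^n⌋·2^n/5^n⌋ + 1. -/
theorem restore_identity (n : ℕ) (hn : 1 ≤ n) (x : ℤ) (hx1 : 1 ≤ x) (hx2 : x ≤ 2 ^ n - 1) :
    x = ⌊((⌊((x : ℚ) * 5 ^ n / 2 ^ n)⌋ : ℚ) * 2 ^ n / 5 ^ n)⌋ + 1 := by
  have h1 : ((x : ℚ) * 5 ^ n / 2 ^ n) = ((x * 5 ^ n : ℤ) : ℚ) / ((2 ^ n : ℕ) : ℚ) := by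
    push_cast; ring
  rw [h1, Rat.floor_intCast_div_natCast]
  set q : ℤ := x * 5 ^ n / (2 ^ n : ℕ) with hq
  have h2 : ((q : ℚ) * 2 ^ n / 5 ^ n) = ((q * 2 ^ n : ℤ) : ℚ) / ((5 ^ n : ℕ) : ℚ) := by
    push_cast; ring
  rw [h2, Rat.floor_intCast_div_natCast]
  -- r := (x * 5^n) % 2^n, 0 < r < 2^n ≤ 5^n
  set r : ℤ := x * 5 ^ n % (2 ^ n : ℕ) with hr
  have h2n : (0:ℤ) < (2 ^ n : ℕ) := by positivity
  have hrlt : r < (2 ^ n : ℕ) := Int.emod_lt_of_pos _ h2n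
  have hrpos : 0 < r := by
    rcases lt_or_eq_of_le (Int.emod_nonneg (x * 5 ^ n) h2n.ne') with h | h
    · exact h
    · exfalso
      have hdvd : ((2:ℤ) ^ n) ∣ x * 5 ^ n := by
        have := Int.dvd_of_emod_eq_zero h.symm
        simpa using this
      have hcop : IsCoprime ((2:ℤ) ^ n) (5 ^ n) := by
        apply IsCoprime.pow
        exact Int.isCoprime_iff_gcd_eq_one.mpr rfl
      have hx : ((2:ℤ) ^ n) ∣ x := hcop.dvd_of_dvd_mul_right hdvd
      have := Int.le_of_dvd (by linarith) hx
      linarith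
  have hq2 : q * 2 ^ n = x * 5 ^ n - r := by
    rw [hq, hr]
    push_cast
    have := Int.emod_add_mul_ediv (x * 5 ^ n) (2 ^ n)
    linarith
  push_cast at hrlt
  have h25 : (2:ℤ) ^ n ≤ 5 ^ n := by
    apply pow_le_pow_left₀ <;> norm_num
  have hkey : q * 2 ^ n = (5 ^ n - r) + (x - 1) * 5 ^ n := by
    rw [hq2]; ring
  have : (q * 2 ^ n) / ((5:ℤ) ^ n) = x - 1 := by
    rw [hkey, Int.add_mul_ediv_right _ _ (by positivity : (5:ℤ)^n ≠ 0)]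
    rw [Int.ediv_eq_zero_of_lt (by linarith) (by linarith)]
    ring
  push_cast at this ⊢
  omega
end

section
/- For every natural number n ≥ 1 and integer x with 1 ≤ x ≤ 2^n − 1, we have 0 < (5^n·x/2^n − ⌊5^n·x/2^n⌋) · (2^n/5^n) < 1. -/
theorem Int.fract_natCast_div_natCast_pos {k : Type*} [Field k] [LinearOrder k] [IsOrderedRing k]
    [FloorRing k] {m n : ℕ} (hn : 0 < n) (h : ¬ n ∣ m) : 0 < Int.fract ((m : k) / n) := by
  rw [Int.fract_div_natCast_eq_div_natCast_mod]
  have hmod : 0 < m % n := Nat.pos_of_ne_zero fun h0 => h (Nat.dvd_of_mod_eq_zero h0)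
  positivity

theorem Int.fract_mul_div_pos_of_coprime {k : Type*} [Field k] [LinearOrder k] [IsOrderedRing k]
    [FloorRing k] {a b x : ℕ} (hab : b.Coprime a) (hx0 : 0 < x) (hxb : x < b) :
    0 < Int.fract ((a * x : k) / b) := by
  have hdvd : ¬ b ∣ a * x := fun h => Nat.not_dvd_of_pos_of_lt hx0 hxb (hab.dvd_of_dvd_mul_left h)
  exact_mod_cast Int.fract_natCast_div_natCast_pos (k := k) (hx0.trans hxb) hdvd

theorem fractional_loss_bound_general (n : ℕ) (x : ℤ) (hx1 : 1 ≤ x) (hx2 : x ≤ 2 ^ n - 1) :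
    0 < ((5 ^ n * (x : ℚ) / 2 ^ n - ⌊(5 ^ n * (x : ℚ) / 2 ^ n)⌋) * (2 ^ n / 5 ^ n)) ∧
    ((5 ^ n * (x : ℚ) / 2 ^ n - ⌊(5 ^ n * (x : ℚ) / 2 ^ n)⌋) * (2 ^ n / 5 ^ n)) < 1 := by
  lift x to ℕ using by omega
  have hx0 : 0 < x := by exact_mod_cast hx1
  have hxb : x < 2 ^ n := by
    have : (x : ℤ) < 2 ^ n := by omega
    exact_mod_cast this
  have hfract : 0 < Int.fract ((5 ^ n * x : ℚ) / 2 ^ n) := by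
    exact_mod_cast Int.fract_mul_div_pos_of_coprime (k := ℚ)
      (Nat.Coprime.pow n n (by norm_num : Nat.Coprime 2 5)) hx0 hxb
  have hratio : (2 : ℚ) ^ n / 5 ^ n ≤ 1 :=
    div_le_one_of_le₀ (pow_le_pow_left₀ (by norm_num) (by norm_num) n) (by positivity)
  push_cast
  rw [Int.self_sub_floor]
  exact ⟨mul_pos hfract (by positivity),
    mul_lt_one_of_nonneg_of_lt_one_left (Int.fract_nonneg _) (Int.fract_lt_one _) hratio⟩

theorem fractional_loss_bound (n : ℕ) (hn : 1 ≤ n) (x : ℤ) (hx1 : 1 ≤ x) (hx2 : x ≤ 2 ^ n - 1) :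
    0 < ((5 ^ n * (x : ℚ) / 2 ^ n - ⌊(5 ^ n * (x : ℚ) / 2 ^ n)⌋) * (2 ^ n / 5 ^ n)) ∧
    ((5 ^ n * (x : ℚ) / 2 ^ n - ⌊(5 ^ n * (x : ℚ) / 2 ^ n)⌋) * (2 ^ n / 5 ^ n)) < 1 :=
  fractional_loss_bound_general n x hx1 hx2
end

section
/- For every natural number n ≥ 1 and integer x with 1 ≤ x ≤ 2^n − 1, the quantity ⌊⌊5^n·x/2^n⌋·2^n/5^n⌋ equals x − 1; equivalently, x − 2 < ⌊5^n·x/2^n⌋·2^n/5^n < x. -/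
theorem double_floor_eq_sub_one (n : ℕ) (hn : 1 ≤ n) (x : ℤ) (hx1 : 1 ≤ x) (hx2 : x ≤ 2 ^ n - 1) :
    ⌊((⌊(5 ^ n * (x : ℚ) / 2 ^ n)⌋ : ℚ) * 2 ^ n / 5 ^ n)⌋ = x - 1 ∧
    ((x : ℚ) - 2 < (⌊(5 ^ n * (x : ℚ) / 2 ^ n)⌋ : ℚ) * 2 ^ n / 5 ^ n ∧
      (⌊(5 ^ n * (x : ℚ) / 2 ^ n)⌋ : ℚ) * 2 ^ n / 5 ^ n < (x : ℚ)) := by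
  set m : ℤ := ⌊(5 ^ n * (x : ℚ) / 2 ^ n)⌋ with hm
  have hb : (0:ℚ) < 2 ^ n := by positivity
  have h5q : (0:ℚ) < 5 ^ n := by positivity
  have h1 : m * 2 ^ n ≤ 5 ^ n * x := by
    have h := Int.floor_le (5 ^ n * (x : ℚ) / 2 ^ n)
    rw [← hm, le_div_iff₀ hb] at h
    exact_mod_cast h
  have h2 : 5 ^ n * x < (m + 1) * 2 ^ n := by
    have h := Int.lt_floor_add_one (5 ^ n * (x : ℚ) / 2 ^ n)
    rw [← hm, div_lt_iff₀ hb] at h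
    exact_mod_cast h
  have hne : m * 2 ^ n ≠ 5 ^ n * x := by
    intro h
    have hdvd : (2:ℤ) ^ n ∣ 5 ^ n * x := ⟨m, by linarith [h]⟩
    have hcop : IsCoprime ((2:ℤ) ^ n) ((5:ℤ) ^ n) := by
      exact (Int.isCoprime_iff_gcd_eq_one.mpr (by decide)).pow
    have hdx : (2:ℤ) ^ n ∣ x := hcop.dvd_of_dvd_mul_left hdvd
    have := Int.le_of_dvd (by linarith) hdx
    linarith
  have hlt : m * 2 ^ n < 5 ^ n * x := lt_of_le_of_ne h1 hne
  have h25 : (2:ℤ) ^ n ≤ 5 ^ n := pow_le_pow_left₀ (by norm_num) (by norm_num) n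
  have hgt : 5 ^ n * (x - 1) < m * 2 ^ n := by nlinarith
  have hltq : (m:ℚ) * 2 ^ n / 5 ^ n < (x:ℚ) := by
    rw [div_lt_iff₀ h5q]
    exact_mod_cast (by linarith : m * 2 ^ n < (x:ℤ) * 5 ^ n)
  have hgtq : (x:ℚ) - 1 < (m:ℚ) * 2 ^ n / 5 ^ n := by
    rw [lt_div_iff₀ h5q]
    have : ((x:ℤ) - 1) * 5 ^ n < m * 2 ^ n := by linarith
    push_cast
    exact_mod_cast this
  refine ⟨?_, by linarith, hltq⟩
  rw [Int.floor_eq_iff]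
  constructor
  · push_cast; linarith
  · push_cast; linarith
end

section
/- Let c₁ ∈ ℤ^{n₁}, c₂ ∈ ℤ^{n₂}, b₁, b₂ ∈ ℤ, and let u ∈ ℤ^{n₁} with u ≥ 0. Suppose a ∈ ℤ satisfies a > c₁ᵀu and c₁ has nonnegative entries, and let x₁ ∈ ℤ^{n₁} with 0 ≤ x₁ ≤ u and x₂ ∈ ℤ^{n₂}. Assume 0 ≤ b₁ ≤ c₁ᵀu. Then c₁ᵀx₁ + a·(c₂ᵀx₂) = b₁ + a·b₂ holds if and only if c₁ᵀx₁ = b₁ and c₂ᵀx₂ = b₂. -/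
theorem combine_constraints (n₁ n₂ : ℕ) (c₁ : Fin n₁ → ℤ) (c₂ : Fin n₂ → ℤ)
    (b₁ b₂ : ℤ) (u : Fin n₁ → ℤ) (hu : ∀ i, 0 ≤ u i) (hc₁ : ∀ i, 0 ≤ c₁ i)
    (a : ℤ) (ha : ∑ i, c₁ i * u i < a)
    (x₁ : Fin n₁ → ℤ) (hx₁l : ∀ i, 0 ≤ x₁ i) (hx₁u : ∀ i, x₁ i ≤ u i)
    (x₂ : Fin n₂ → ℤ) (hb₁l : 0 ≤ b₁) (hb₁u : b₁ ≤ ∑ i, c₁ i * u i) :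
    (∑ i, c₁ i * x₁ i) + a * (∑ i, c₂ i * x₂ i) = b₁ + a * b₂ ↔
      (∑ i, c₁ i * x₁ i) = b₁ ∧ (∑ i, c₂ i * x₂ i) = b₂ := by
  constructor
  · intro h
    set S := ∑ i, c₁ i * x₁ i with hS
    set T := ∑ i, c₂ i * x₂ i with hT
    have hS0 : 0 ≤ S := Finset.sum_nonneg fun i _ => mul_nonneg (hc₁ i) (hx₁l i)
    have hSu : S ≤ ∑ i, c₁ i * u i :=
      Finset.sum_le_sum fun i _ => mul_le_mul_of_nonneg_left (hx₁u i) (hc₁ i)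
    have ha' : 0 < a := lt_of_le_of_lt (le_trans hS0 hSu) ha
    have key : S - b₁ = a * (b₂ - T) := by linarith
    have hb : b₂ = T := by
      by_contra hne
      have h1 : 1 ≤ |b₂ - T| := by
        exact Int.one_le_abs (sub_ne_zero.mpr hne)
      have h2 : a ≤ |a * (b₂ - T)| := by
        rw [abs_mul, abs_of_pos ha']
        nlinarith
      have h3 : |S - b₁| < a := by
        rw [abs_lt]; constructor <;> linarith
      rw [← key] at h2
      linarith
    refine ⟨?_, hb.symm⟩
    have : S - b₁ = 0 := by rw [key, hb]; ring
    linarith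
  · rintro ⟨h1, h2⟩; rw [h1, h2]
end

section
/- Let n ≥ 1 and x ∈ {1,…,2^n−1}. Then ⌊5^n·x/2^n⌋ = (5^n·x − (5^n·x mod 2^n))/2^n, and 5^n·x mod 2^n ∈ {1,…,2^n−1}; consequently x = ⌊(⌊5^n·x/2^n⌋·2^n)/5^n⌋ + 1 where the '+1' exactly compensates the two strictly positive fractional losses. -/
theorem combined_key_claim (n : ℕ) (hn : 1 ≤ n) (x : ℤ) (hx1 : 1 ≤ x) (hx2 : x ≤ 2 ^ n - 1) :
    ⌊(5 ^ n * (x : ℚ) / 2 ^ n)⌋ = (5 ^ n * x - 5 ^ n * x % 2 ^ n) / 2 ^ n ∧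
    (1 ≤ 5 ^ n * x % 2 ^ n ∧ 5 ^ n * x % 2 ^ n ≤ 2 ^ n - 1) ∧
    x = ⌊((⌊(5 ^ n * (x : ℚ) / 2 ^ n)⌋ : ℚ) * 2 ^ n / 5 ^ n)⌋ + 1 := by
  have h2 : (0:ℤ) < 2 ^ n := by positivity
  set r : ℤ := 5 ^ n * x % 2 ^ n with hr
  have hfloor : ⌊(5 ^ n * (x : ℚ) / 2 ^ n)⌋ = (5 ^ n * x) / 2 ^ n := by
    have h := Rat.floor_intCast_div_natCast (5 ^ n * x) (2 ^ n)
    have e : (5 ^ n * (x : ℚ) / 2 ^ n) = (((5 ^ n * x : ℤ) : ℚ) / ((2 ^ n : ℕ) : ℚ)) := by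
      push_cast; ring
    rw [e, h]; push_cast; ring_nf
  have hrnonneg : 0 ≤ r := Int.emod_nonneg _ (by positivity)
  have hrlt : r < 2 ^ n := Int.emod_lt_of_pos _ h2
  have hrne : r ≠ 0 := by
    intro h0
    have hdvd : (2:ℤ) ^ n ∣ 5 ^ n * x := Int.dvd_of_emod_eq_zero h0
    have hcop : IsCoprime ((2:ℤ) ^ n) (5 ^ n) := by
      apply IsCoprime.pow
      norm_num [Int.isCoprime_iff_gcd_eq_one]
    have hdvdx : (2:ℤ) ^ n ∣ x := hcop.dvd_of_dvd_mul_left hdvd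
    have := Int.le_of_dvd (by linarith) hdvdx
    linarith
  have hr1 : 1 ≤ r := lt_of_le_of_ne hrnonneg (Ne.symm hrne)
  have hediv : (5 ^ n * x) / 2 ^ n = (5 ^ n * x - r) / 2 ^ n := by
    have e : 5 ^ n * x - r = 2 ^ n * (5 ^ n * x / 2 ^ n) := by
      rw [hr, Int.emod_def]; ring
    rw [e, Int.mul_ediv_cancel_left _ (by positivity)]
  refine ⟨by rw [hfloor, hediv], ⟨hr1, by omega⟩, ?_⟩
  rw [hfloor]
  have hqmul : ((5 ^ n * x) / 2 ^ n) * 2 ^ n = 5 ^ n * x - r := by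
    have := Int.emod_add_mul_ediv (5 ^ n * x) (2 ^ n)
    linarith [this]
  have : ((((5 ^ n * x) / 2 ^ n : ℤ) : ℚ) * 2 ^ n / 5 ^ n) = ((5 ^ n * x - r : ℤ) : ℚ) / ((5^n : ℕ) : ℚ) := by
    push_cast [← hqmul]
    ring
  rw [this, Rat.floor_intCast_div_natCast]
  have h5 : (0:ℤ) < 5 ^ n := by positivity
  have h5n : r < 5 ^ n := lt_of_lt_of_le hrlt (pow_le_pow_left₀ (by norm_num) (by norm_num) n)
  have : (5 ^ n * x - r) / ((5:ℤ) ^ n) = x - 1 := by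
    have e : 5 ^ n * x - r = (5 ^ n - r) + 5 ^ n * (x - 1) := by ring
    rw [e, Int.add_mul_ediv_left _ _ (ne_of_gt h5),
      Int.ediv_eq_zero_of_lt (by omega) (by omega)]
    ring
  push_cast [this]
  ring
end
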